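/- Let K be a real m×n matrix whose Gram matrix KᵀK is invertible, and set K⁺ := (KᵀK)⁻¹Kᵀ. Let B ∈ ℝ^{m×p}, D ∈ ℝ^{r×p}, P ∈ ℝ^{s×r}, and let θ ∈ [0, 1]. Then the mixed Neumann–Neumann system matrix S_θ := BᵀB + Dᵀ(θ PᵀP + (1−θ) I_r) D − Bᵀ K K⁺ B is symmetric and positive semidefinite; equivalently, S_θ = Bᵀ(I_m − K K⁺)B + Dᵀ(θ PᵀP + (1−θ) I_r) D, and μᵀ S_θ μ = ‖(I_m − K K⁺) B μ‖² + θ‖P D μ‖² + (1−θ)‖D μ‖² ≥ 0 for all μ ∈ ℝ^p. -/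
import Mathlib

open Matrix

lemma sq_dot {a b : ℕ} (A : Matrix (Fin a) (Fin b) ℝ) (μ : Fin b → ℝ) :
    μ ⬝ᵥ ((Aᵀ * A) *ᵥ μ) = (A *ᵥ μ) ⬝ᵥ (A *ᵥ μ) := by
  rw [← mulVec_mulVec, dotProduct_mulVec, vecMul_transpose]

lemma dot_self_nonneg {a : ℕ} (v : Fin a → ℝ) : 0 ≤ v ⬝ᵥ v := by
  unfold dotProduct
  exact Finset.sum_nonneg fun i _ => mul_self_nonneg _

/-- The mixed Neumann–Neumann system matrix
`S_θ = BᵀB + Dᵀ(θPᵀP + (1−θ)I)D − BᵀKK⁺B` (with `K⁺ = (KᵀK)⁻¹Kᵀ`) is symmetric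
positive semidefinite: it equals `Bᵀ(I − KK⁺)B + Dᵀ(θPᵀP + (1−θ)I)D`, and
`μᵀS_θμ = ‖(I − KK⁺)Bμ‖² + θ‖PDμ‖² + (1−θ)‖Dμ‖² ≥ 0` for every `μ`. -/
theorem ddelm_mixed_nn_matrix_psd {m n p r s : ℕ}
    (K : Matrix (Fin m) (Fin n) ℝ) (B : Matrix (Fin m) (Fin p) ℝ)
    (D : Matrix (Fin r) (Fin p) ℝ) (P : Matrix (Fin s) (Fin r) ℝ)
    (θ : ℝ) (hθ0 : 0 ≤ θ) (hθ1 : θ ≤ 1)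
    (Kp : Matrix (Fin n) (Fin m) ℝ) (hKp : Kp = (Kᵀ * K)⁻¹ * Kᵀ)
    (hK : IsUnit (Kᵀ * K).det)
    (Sθ : Matrix (Fin p) (Fin p) ℝ)
    (hSθ : Sθ = Bᵀ * B + Dᵀ * (θ • (Pᵀ * P) + (1 - θ) • (1 : Matrix (Fin r) (Fin r) ℝ)) * D
        - Bᵀ * K * Kp * B) :
    Sθᵀ = Sθ ∧
    Sθ = Bᵀ * ((1 : Matrix (Fin m) (Fin m) ℝ) - K * Kp) * B
        + Dᵀ * (θ • (Pᵀ * P) + (1 - θ) • (1 : Matrix (Fin r) (Fin r) ℝ)) * D ∧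
    ∀ μ : Fin p → ℝ,
      μ ⬝ᵥ (Sθ *ᵥ μ)
        = ((((1 : Matrix (Fin m) (Fin m) ℝ) - K * Kp) * B) *ᵥ μ) ⬝ᵥ
            ((((1 : Matrix (Fin m) (Fin m) ℝ) - K * Kp) * B) *ᵥ μ)
          + θ * (((P * D) *ᵥ μ) ⬝ᵥ ((P * D) *ᵥ μ))
          + (1 - θ) * ((D *ᵥ μ) ⬝ᵥ (D *ᵥ μ)) ∧
      0 ≤ μ ⬝ᵥ (Sθ *ᵥ μ) := by
  set Q : Matrix (Fin m) (Fin m) ℝ := K * Kp with hQ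
  have hKpK : Kp * K = 1 := by
    rw [hKp, Matrix.mul_assoc, Matrix.nonsing_inv_mul _ hK]
  have hQt : Qᵀ = Q := by
    rw [hQ, hKp, transpose_mul, transpose_mul, Matrix.transpose_nonsing_inv,
      transpose_mul, transpose_transpose, Matrix.mul_assoc]
  have hQQ : Q * Q = Q := by
    rw [hQ, Matrix.mul_assoc K Kp (K * Kp), ← Matrix.mul_assoc Kp K Kp, hKpK,
      Matrix.one_mul]
  have hproj : ((1 : Matrix (Fin m) (Fin m) ℝ) - Q)ᵀ * (1 - Q) = 1 - Q := by
    rw [transpose_sub, transpose_one, hQt]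
    have : ((1 : Matrix (Fin m) (Fin m) ℝ) - Q) * (1 - Q) = 1 - Q - Q + Q * Q := by
      noncomm_ring
    rw [this, hQQ]
    abel
  have h2 : Sθ = Bᵀ * ((1 : Matrix (Fin m) (Fin m) ℝ) - Q) * B
      + Dᵀ * (θ • (Pᵀ * P) + (1 - θ) • (1 : Matrix (Fin r) (Fin r) ℝ)) * D := by
    rw [hSθ, Matrix.mul_assoc Bᵀ K Kp, ← hQ, Matrix.mul_sub, Matrix.mul_one,
      Matrix.sub_mul]
    abel
  have hsym : Sθᵀ = Sθ := by
    rw [h2]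
    simp [transpose_add, transpose_mul, transpose_sub, transpose_smul,
      Matrix.mul_assoc, hQt]
  refine ⟨hsym, h2, fun μ => ?_⟩
  have key : μ ⬝ᵥ (Sθ *ᵥ μ)
      = ((((1 : Matrix (Fin m) (Fin m) ℝ) - Q) * B) *ᵥ μ) ⬝ᵥ
          ((((1 : Matrix (Fin m) (Fin m) ℝ) - Q) * B) *ᵥ μ)
        + θ * (((P * D) *ᵥ μ) ⬝ᵥ ((P * D) *ᵥ μ))
        + (1 - θ) * ((D *ᵥ μ) ⬝ᵥ (D *ᵥ μ)) := by
    have e1 : Bᵀ * ((1 : Matrix (Fin m) (Fin m) ℝ) - Q) * B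
        = (((1 : Matrix (Fin m) (Fin m) ℝ) - Q) * B)ᵀ * (((1 : Matrix (Fin m) (Fin m) ℝ) - Q) * B) := by
      calc Bᵀ * ((1 : Matrix (Fin m) (Fin m) ℝ) - Q) * B
          = Bᵀ * (((1 : Matrix (Fin m) (Fin m) ℝ) - Q)ᵀ * (1 - Q)) * B := by rw [hproj]
        _ = _ := by simp only [transpose_mul, Matrix.mul_assoc]
    have e2 : Dᵀ * (θ • (Pᵀ * P) + (1 - θ) • (1 : Matrix (Fin r) (Fin r) ℝ)) * D
        = θ • ((P * D)ᵀ * (P * D)) + (1 - θ) • (Dᵀ * D) := by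
      simp [Matrix.mul_add, Matrix.add_mul, Matrix.mul_smul, Matrix.smul_mul,
        Matrix.mul_assoc, transpose_mul]
    rw [h2, e1, e2, Matrix.add_mulVec, Matrix.add_mulVec, dotProduct_add,
      dotProduct_add, Matrix.smul_mulVec, Matrix.smul_mulVec,
      dotProduct_smul, dotProduct_smul, sq_dot, sq_dot, sq_dot, smul_eq_mul,
      smul_eq_mul]
    ring
  refine ⟨key, ?_⟩
  rw [key]
  have h1 := dot_self_nonneg ((((1 : Matrix (Fin m) (Fin m) ℝ) - Q) * B) *ᵥ μ)
  have h2' := dot_self_nonneg ((P * D) *ᵥ μ)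
  have h3 := dot_self_nonneg (D *ᵥ μ)
  have h4 : (0:ℝ) ≤ 1 - θ := by linarith
  nlinarith [mul_nonneg hθ0 h2', mul_nonneg h4 h3]
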